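/- arXiv:1601.06283 — 3 statements merged into one kernel-verified Lean document; each statement's English description precedes it below -/
import Mathlib

section
/- Let N ≥ 1 and equip u(N) with the inner product ⟨X,Y⟩ = N·trace(X*Y). If {X_k} is any orthonormal basis of u(N), then ∑_k X_k² = −I, where I is the N×N identity matrix. -/
open scoped BigOperators Matrix

noncomputable def mulIEquiv (n : Type*) [Fintype n] :
    selfAdjoint (Matrix n n ℂ) ≃ₗ[ℝ] skewAdjoint (Matrix n n ℂ) where
  toFun x := ⟨Complex.I • (x : Matrix n n ℂ), by
    rw [skewAdjoint.mem_iff, star_smul, Complex.star_def, Complex.conj_I, neg_smul, x.2.star_eq]⟩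
  invFun y := ⟨(-Complex.I) • (y : Matrix n n ℂ), by
    rw [selfAdjoint.mem_iff, star_smul]
    simp [skewAdjoint.mem_iff.mp y.2]⟩
  map_add' x y := by ext1; simp [smul_add]
  map_smul' r x := by ext1; exact smul_comm _ _ _
  left_inv x := by ext1; simp [smul_smul]
  right_inv y := by ext1; simp [smul_smul]

theorem finrank_skewAdjoint_matC (n : Type*) [Fintype n] :
    Module.finrank ℝ (skewAdjoint (Matrix n n ℂ)) = Fintype.card n * Fintype.card n := by
  have hfd : FiniteDimensional ℝ (Matrix n n ℂ) := by
    have : FiniteDimensional ℂ (Matrix n n ℂ) := by infer_instance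
    exact Module.Finite.trans ℂ _
  have hA : Module.finrank ℝ (Matrix n n ℂ) = Fintype.card n * Fintype.card n * 2 := by
    rw [← Module.finrank_mul_finrank ℝ ℂ (Matrix n n ℂ), Complex.finrank_real_complex,
      Module.finrank_matrix, Module.finrank_self]
    ring
  have hself : FiniteDimensional ℝ (selfAdjoint (Matrix n n ℂ)) :=
    FiniteDimensional.of_injective (selfAdjoint.submodule ℝ (Matrix n n ℂ)).subtype
      (Submodule.injective_subtype _)
  have hskew : FiniteDimensional ℝ (skewAdjoint (Matrix n n ℂ)) :=
    FiniteDimensional.of_injective (skewAdjoint.submodule ℝ (Matrix n n ℂ)).subtype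
      (Submodule.injective_subtype _)
  have hdec := (StarModule.decomposeProdAdjoint ℝ (Matrix n n ℂ)).finrank_eq
  rw [Module.finrank_prod, hA, (mulIEquiv n).finrank_eq] at hdec
  omega

/-- For any orthonormal basis `{X k}` of `u(N)` with inner product
`⟨X,Y⟩ = N·Re(trace(Xᴴ Y))`, one has `∑ k, (X k)² = -1`. -/
theorem sum_sq_orthonormal_basis_uN {N : ℕ} (hN : 1 ≤ N)
    {ι : Type*} [Fintype ι] [DecidableEq ι]
    (X : ι → Matrix (Fin N) (Fin N) ℂ)
    (hskew : ∀ k, (X k)ᴴ = -(X k))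
    (horth : ∀ j k, (N : ℝ) * (Matrix.trace ((X j)ᴴ * X k)).re = if j = k then 1 else 0)
    (hspan : ∀ C : Matrix (Fin N) (Fin N) ℂ, Cᴴ = -C →
      ∃ c : ι → ℝ, C = ∑ k, c k • X k) :
    ∑ k, X k * X k = -(1 : Matrix (Fin N) (Fin N) ℂ) := by
  classical
  -- coefficient extraction
  have key : ∀ (s : Finset ι) (g : ι → ℝ) (j : ι), j ∈ s →
      (N : ℝ) * (Matrix.trace ((X j)ᴴ * ∑ i ∈ s, g i • X i)).re = g j := by
    intro s g j hj
    rw [Matrix.mul_sum, Matrix.trace_sum]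
    rw [Complex.re_sum, Finset.mul_sum]
    rw [Finset.sum_congr rfl (fun i _ => ?_), Finset.sum_ite_eq s j g, if_pos hj]
    rw [Matrix.mul_smul, Matrix.trace_smul, Complex.smul_re, smul_eq_mul]
    rw [show (N:ℝ) * (g i * (Matrix.trace ((X j)ᴴ * X i)).re)
        = g i * ((N:ℝ) * (Matrix.trace ((X j)ᴴ * X i)).re) by ring, horth, mul_ite, mul_one,
      mul_zero]
  -- reconstruction
  have recon : ∀ C : Matrix (Fin N) (Fin N) ℂ, Cᴴ = -C →
      C = ∑ k, ((N : ℝ) * (Matrix.trace ((X k)ᴴ * C)).re) • X k := by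
    intro C hC
    obtain ⟨c, hc⟩ := hspan C hC
    conv_lhs => rw [hc]
    refine Finset.sum_congr rfl fun k _ => ?_
    rw [hc, key Finset.univ c k (Finset.mem_univ k)]
  set S := ∑ k, X k * X k with hS
  -- S commutes with skew matrices
  have hcommSkew : ∀ C : Matrix (Fin N) (Fin N) ℂ, Cᴴ = -C → S * C = C * S := by
    intro C hC
    have hBskew : ∀ k, (X k * C - C * X k)ᴴ = -(X k * C - C * X k) := by
      intro k
      simp only [Matrix.conjTranspose_sub, Matrix.conjTranspose_mul, hskew k, hC]
      noncomm_ring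
    set c : ι → ι → ℝ := fun k j => (N : ℝ) * (Matrix.trace ((X j)ᴴ * (X k * C - C * X k))).re
      with hcdef
    have hB : ∀ k, X k * C - C * X k = ∑ j, c k j • X j := fun k => recon _ (hBskew k)
    have hanti : ∀ k j, c k j = - c j k := by
      intro k j
      have htr : Matrix.trace ((X j)ᴴ * (X k * C - C * X k))
          = - Matrix.trace ((X k)ᴴ * (X j * C - C * X j)) := by
        rw [hskew j, hskew k]
        rw [Matrix.mul_sub, Matrix.mul_sub, Matrix.trace_sub, Matrix.trace_sub]
        rw [Matrix.neg_mul, Matrix.neg_mul, Matrix.neg_mul, Matrix.neg_mul]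
        rw [Matrix.trace_neg, Matrix.trace_neg, Matrix.trace_neg, Matrix.trace_neg]
        rw [← Matrix.mul_assoc, ← Matrix.mul_assoc, ← Matrix.mul_assoc, ← Matrix.mul_assoc]
        rw [Matrix.trace_mul_cycle (X j) C (X k), Matrix.trace_mul_cycle (X k) C (X j)]
        ring
      rw [hcdef]
      simp only [htr, Complex.neg_re, mul_neg, neg_neg]
    have expand : S * C - C * S = ∑ k, (X k * (X k * C - C * X k) + (X k * C - C * X k) * X k) := by
      rw [hS, Finset.sum_mul, Finset.mul_sum, ← Finset.sum_sub_distrib]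
      refine Finset.sum_congr rfl fun k _ => ?_
      noncomm_ring
    have expand2 : S * C - C * S = ∑ k, ∑ j, c k j • (X k * X j + X j * X k) := by
      rw [expand]
      refine Finset.sum_congr rfl fun k _ => ?_
      rw [hB k, Finset.mul_sum, Finset.sum_mul, ← Finset.sum_add_distrib]
      refine Finset.sum_congr rfl fun j _ => ?_
      rw [Matrix.mul_smul, Matrix.smul_mul, ← smul_add]
    have hzero : (∑ k, ∑ j, c k j • (X k * X j + X j * X k)) = 0 := by
      have hswap : (∑ k, ∑ j, c k j • (X k * X j + X j * X k))
          = ∑ k, ∑ j, c j k • (X k * X j + X j * X k) := by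
        rw [Finset.sum_comm]
        refine Finset.sum_congr rfl fun k _ => Finset.sum_congr rfl fun j _ => ?_
        rw [add_comm]
      have : (2 : ℝ) • (∑ k, ∑ j, c k j • (X k * X j + X j * X k)) = 0 := by
        rw [two_smul]
        nth_rewrite 2 [hswap]
        rw [← Finset.sum_add_distrib]
        refine Finset.sum_eq_zero fun k _ => ?_
        rw [← Finset.sum_add_distrib]
        refine Finset.sum_eq_zero fun j _ => ?_
        rw [hanti k j, neg_smul, neg_add_cancel]
      have h2 : (2:ℝ) ≠ 0 := two_ne_zero
      rwa [smul_eq_zero_iff_right h2] at this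
    have hfin : S * C - C * S = 0 := by rw [expand2, hzero]
    exact sub_eq_zero.mp hfin
  -- S commutes with every matrix
  have hcommAll : ∀ M : Matrix (Fin N) (Fin N) ℂ, S * M = M * S := by
    intro M
    have hA : ((1/2 : ℂ) • (M - Mᴴ))ᴴ = -((1/2 : ℂ) • (M - Mᴴ)) := by
      rw [Matrix.conjTranspose_smul, Matrix.conjTranspose_sub, Matrix.conjTranspose_conjTranspose,
        ← smul_neg, neg_sub]
      congr 1
      simp
    have hB : (((-Complex.I)/2) • (M + Mᴴ))ᴴ = -(((-Complex.I)/2) • (M + Mᴴ)) := by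
      rw [Matrix.conjTranspose_smul, Matrix.conjTranspose_add, Matrix.conjTranspose_conjTranspose,
        ← neg_smul]
      rw [add_comm]
      congr 1
      simp [Complex.star_def, neg_div]
    have hM : M = (1/2 : ℂ) • (M - Mᴴ) + Complex.I • (((-Complex.I)/2) • (M + Mᴴ)) := by
      rw [smul_smul, show Complex.I * (-Complex.I/2) = 1/2 by
        rw [← mul_div_assoc, mul_neg, Complex.I_mul_I]; norm_num]
      module
    have h1 := hcommSkew _ hA
    have h2 := hcommSkew _ hB
    rw [Matrix.mul_smul, Matrix.smul_mul] at h1 h2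
    have e1 : S * (M - Mᴴ) = (M - Mᴴ) * S :=
      smul_right_injective _ (by norm_num : (1/2 : ℂ) ≠ 0) h1
    have e2 : S * (M + Mᴴ) = (M + Mᴴ) * S := by
      refine smul_right_injective _ (?_ : (-Complex.I/2 : ℂ) ≠ 0) h2
      simp [Complex.I_ne_zero, div_eq_zero_iff]
    conv_lhs => rw [hM]
    conv_rhs => rw [hM]
    simp only [Matrix.mul_add, Matrix.add_mul, Matrix.mul_smul, Matrix.smul_mul, e1, e2]
  -- S is scalar
  obtain ⟨r, hr⟩ := Matrix.mem_range_scalar_of_commute_single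
    (M := S) (fun i j _ => (hcommAll _).symm)
  have hNR : (N : ℝ) ≠ 0 := by
    have : (0:ℝ) < N := by exact_mod_cast Nat.lt_of_lt_of_le Nat.zero_lt_one hN
    exact ne_of_gt this
  have ht : ∀ k, Matrix.trace ((X k)ᴴ * X k) = ((1/(N:ℝ) : ℝ) : ℂ) := by
    intro k
    have him : star (Matrix.trace ((X k)ᴴ * X k)) = Matrix.trace ((X k)ᴴ * X k) := by
      rw [← Matrix.trace_conjTranspose, Matrix.conjTranspose_mul,
      Matrix.conjTranspose_conjTranspose]
    have him' : (Matrix.trace ((X k)ᴴ * X k)).im = 0 :=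
      Complex.conj_eq_iff_im.mp him
    have hre := horth k k
    rw [if_pos rfl] at hre
    apply Complex.ext
    · rw [Complex.ofReal_re]
      field_simp
      linarith [hre]
    · rw [him', Complex.ofReal_im]
  have htrk : ∀ k, Matrix.trace (X k * X k) = -((1/(N:ℝ) : ℝ) : ℂ) := by
    intro k
    have hx : X k = -(X k)ᴴ := by rw [hskew k, neg_neg]
    nth_rewrite 1 [hx]
    rw [Matrix.neg_mul, Matrix.trace_neg, ht k]
  have hmem : ∀ k, X k ∈ skewAdjoint (Matrix (Fin N) (Fin N) ℂ) := by
    intro k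
    rw [skewAdjoint.mem_iff, Matrix.star_eq_conjTranspose]
    exact hskew k
  have hcard : Fintype.card ι = N * N := by
    set v : ι → skewAdjoint (Matrix (Fin N) (Fin N) ℂ) := fun k => ⟨X k, hmem k⟩ with hv
    have hindep : LinearIndependent ℝ v := by
      rw [linearIndependent_iff']
      intro s g hg j hj
      have hg' : (∑ i ∈ s, g i • X i) = 0 := by
        have h0 := congrArg
          (fun x : skewAdjoint (Matrix (Fin N) (Fin N) ℂ) => (x : Matrix (Fin N) (Fin N) ℂ)) hg
        simpa [hv] using h0
      have hk := key s g j hj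
      rw [hg'] at hk
      simpa using hk.symm
    have hsp : ⊤ ≤ Submodule.span ℝ (Set.range v) := by
      rintro ⟨C, hC⟩ -
      have hC' : Cᴴ = -C := by
        rw [skewAdjoint.mem_iff, Matrix.star_eq_conjTranspose] at hC
        exact hC
      obtain ⟨cc, hcc⟩ := hspan C hC'
      have hEq : (⟨C, hC⟩ : skewAdjoint (Matrix (Fin N) (Fin N) ℂ)) = ∑ k, cc k • v k := by
        apply Subtype.ext
        show C = ((∑ k, cc k • v k : skewAdjoint (Matrix (Fin N) (Fin N) ℂ)) :
          Matrix (Fin N) (Fin N) ℂ)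
        rw [hcc]
        simp [hv]
      rw [hEq]
      exact Submodule.sum_mem _ fun k _ => Submodule.smul_mem _ _
        (Submodule.subset_span ⟨k, rfl⟩)
    let b : Module.Basis ι ℝ (skewAdjoint (Matrix (Fin N) (Fin N) ℂ)) := Module.Basis.mk hindep hsp
    have hcb := Module.finrank_eq_card_basis b
    rw [finrank_skewAdjoint_matC (Fin N)] at hcb
    simpa [Fintype.card_fin] using hcb.symm
  have htrS : Matrix.trace S = -(N:ℂ) := by
    rw [hS, Matrix.trace_sum]
    rw [Finset.sum_congr rfl fun k _ => htrk k, Finset.sum_const, Finset.card_univ, hcard,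
      nsmul_eq_mul]
    have hNC : (N : ℂ) ≠ 0 := Nat.cast_ne_zero.mpr (by omega)
    push_cast
    field_simp
  have htrscalar : Matrix.trace (Matrix.scalar (Fin N) r) = (N : ℂ) * r := by
    rw [Matrix.scalar_apply, Matrix.trace_diagonal, Finset.sum_const, Finset.card_univ,
      Fintype.card_fin, nsmul_eq_mul]
  have hrr : r = -1 := by
    have hNC : (N : ℂ) ≠ 0 := Nat.cast_ne_zero.mpr (by omega)
    apply mul_left_cancel₀ hNC
    rw [← htrscalar, hr, htrS]
    ring
  calc (∑ k, X k * X k) = S := hS.symm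
    _ = Matrix.scalar (Fin N) r := hr.symm
    _ = -1 := by rw [hrr, map_neg, map_one]
end

section
/- Let N ≥ 1 and equip u(N) with the inner product ⟨X,Y⟩ = N·trace(X*Y), and let tr = trace/N denote the normalized trace. If {X_k} is any orthonormal basis of u(N), then for all N×N complex matrices A and B, ∑_k tr(A X_k) · tr(B X_k) = −(1/N²) · tr(AB). -/
open scoped BigOperators Matrix

/-- With `tr = trace/N` the normalized trace, for any orthonormal basis
`{X k}` of `u(N)` and any matrices `A, B`:
`∑ k, tr(A X k) · tr(B X k) = -(1/N²) · tr(AB)`. -/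
theorem sum_tr_mul_tr_orthonormal_basis_uN {N : ℕ} (hN : 1 ≤ N)
    {ι : Type*} [Fintype ι] [DecidableEq ι]
    (X : ι → Matrix (Fin N) (Fin N) ℂ)
    (hskew : ∀ k, (X k)ᴴ = -(X k))
    (horth : ∀ j k, (N : ℝ) * (Matrix.trace ((X j)ᴴ * X k)).re = if j = k then 1 else 0)
    (hspan : ∀ C : Matrix (Fin N) (Fin N) ℂ, Cᴴ = -C →
      ∃ c : ι → ℝ, C = ∑ k, c k • X k)
    (A B : Matrix (Fin N) (Fin N) ℂ) :
    ∑ k, (Matrix.trace (A * X k) / (N : ℂ)) * (Matrix.trace (B * X k) / (N : ℂ))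
      = -(1 / (N : ℂ) ^ 2) * (Matrix.trace (A * B) / (N : ℂ)) := by
  have hNR : (N : ℝ) ≠ 0 := Nat.cast_ne_zero.mpr (by omega)
  have hN0 : (N : ℂ) ≠ 0 := Nat.cast_ne_zero.mpr (by omega)
  -- the trace pairing of basis elements
  have htr : ∀ j k, Matrix.trace (X j * X k)
      = (if j = k then -1/(N:ℂ) else 0) := by
    intro j k
    have h := horth j k
    rw [hskew j, Matrix.neg_mul, Matrix.trace_neg] at h
    simp only [Complex.neg_re, mul_neg] at h
    have him : (Matrix.trace (X j * X k)).im = 0 := by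
      have h1 : star (Matrix.trace (X j * X k)) = Matrix.trace (X j * X k) := by
        rw [← Matrix.trace_conjTranspose, Matrix.conjTranspose_mul, hskew, hskew,
          Matrix.neg_mul, Matrix.mul_neg, neg_neg, Matrix.trace_mul_comm]
      have h2 := congrArg Complex.im h1
      simp only [Complex.star_def, Complex.conj_im] at h2
      linarith
    have hkey : Matrix.trace (X j * X k)
        = (((if j = k then -1/(N:ℝ) else 0) : ℝ) : ℂ) := by
      apply Complex.ext
      · rw [Complex.ofReal_re]
        split_ifs with hjk
        · rw [if_pos hjk] at h
          rw [eq_div_iff hNR]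
          linear_combination -h
        · rw [if_neg hjk] at h
          have h0 : (N:ℝ) * (Matrix.trace (X j * X k)).re = 0 := by linarith
          exact (mul_eq_zero.mp h0).resolve_left hNR
      · rw [Complex.ofReal_im, him]
    rw [hkey]
    split_ifs <;> push_cast <;> ring
  -- completeness relation for skew-hermitian matrices
  have hS : ∀ P Q : Matrix (Fin N) (Fin N) ℂ, Pᴴ = -P → Qᴴ = -Q →
      ∑ k, Matrix.trace (P * X k) * Matrix.trace (Q * X k)
        = -(1/(N:ℂ)) * Matrix.trace (P * Q) := by
    intro P Q hP hQ
    obtain ⟨c, hc⟩ := hspan P hP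
    obtain ⟨d, hd⟩ := hspan Q hQ
    have htP : ∀ k, Matrix.trace (P * X k) = -(c k : ℂ)/N := by
      intro k
      rw [hc, Finset.sum_mul, Matrix.trace_sum]
      have h1 : ∀ j, Matrix.trace ((c j • X j) * X k)
          = (if j = k then (c j : ℂ) * (-1/N) else 0) := by
        intro j
        rw [smul_mul_assoc, Matrix.trace_smul, htr]
        simp [Complex.real_smul, mul_ite]
      simp only [h1]
      rw [Finset.sum_ite_eq' Finset.univ k (fun j => (c j : ℂ) * (-1/N))]
      simp only [Finset.mem_univ, if_true]
      ring
    have htQ : ∀ k, Matrix.trace (Q * X k) = -(d k : ℂ)/N := by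
      intro k
      rw [hd, Finset.sum_mul, Matrix.trace_sum]
      have h1 : ∀ j, Matrix.trace ((d j • X j) * X k)
          = (if j = k then (d j : ℂ) * (-1/N) else 0) := by
        intro j
        rw [smul_mul_assoc, Matrix.trace_smul, htr]
        simp [Complex.real_smul, mul_ite]
      simp only [h1]
      rw [Finset.sum_ite_eq' Finset.univ k (fun j => (d j : ℂ) * (-1/N))]
      simp only [Finset.mem_univ, if_true]
      ring
    have htPQ : Matrix.trace (P * Q) = -(∑ k, (c k : ℂ) * (d k : ℂ))/N := by
      calc Matrix.trace (P * Q) = ∑ k, Matrix.trace (P * (d k • X k)) := by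
            rw [hd, Matrix.mul_sum, Matrix.trace_sum]
        _ = ∑ k, (d k : ℂ) * Matrix.trace (P * X k) := by
            refine Finset.sum_congr rfl fun k _ => ?_
            rw [mul_smul_comm, Matrix.trace_smul]
            simp [Complex.real_smul]
        _ = ∑ k, -((c k : ℂ) * (d k : ℂ))/N := by
            refine Finset.sum_congr rfl fun k _ => ?_
            rw [htP]; ring
        _ = -(∑ k, (c k : ℂ) * (d k : ℂ))/N := by
            rw [← Finset.sum_div, ← Finset.sum_neg_distrib]
    simp only [htP, htQ, htPQ]
    have h2 : ∀ k : ι, -(c k : ℂ)/N * (-(d k : ℂ)/N) = ((c k : ℂ) * (d k : ℂ))/N^2 :=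
      fun k => by ring
    simp only [h2]
    rw [← Finset.sum_div]
    ring
  -- decomposition into skew-hermitian parts
  set PA : Matrix (Fin N) (Fin N) ℂ := (2⁻¹ : ℂ) • (A - Aᴴ) with hPA
  set QA : Matrix (Fin N) (Fin N) ℂ := (-(Complex.I/2)) • (A + Aᴴ) with hQA
  set PB : Matrix (Fin N) (Fin N) ℂ := (2⁻¹ : ℂ) • (B - Bᴴ) with hPB
  set QB : Matrix (Fin N) (Fin N) ℂ := (-(Complex.I/2)) • (B + Bᴴ) with hQB
  have hst1 : star (2⁻¹ : ℂ) = 2⁻¹ := by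
    norm_num [Complex.star_def, Complex.ext_iff]
  have hst2 : star (-(Complex.I/2)) = Complex.I/2 := by
    norm_num [Complex.star_def, Complex.ext_iff]
  have hPAs : PAᴴ = -PA := by
    rw [hPA, Matrix.conjTranspose_smul, Matrix.conjTranspose_sub,
      Matrix.conjTranspose_conjTranspose, hst1]
    module
  have hQAs : QAᴴ = -QA := by
    rw [hQA, Matrix.conjTranspose_smul, Matrix.conjTranspose_add,
      Matrix.conjTranspose_conjTranspose, hst2]
    module
  have hPBs : PBᴴ = -PB := by
    rw [hPB, Matrix.conjTranspose_smul, Matrix.conjTranspose_sub,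
      Matrix.conjTranspose_conjTranspose, hst1]
    module
  have hQBs : QBᴴ = -QB := by
    rw [hQB, Matrix.conjTranspose_smul, Matrix.conjTranspose_add,
      Matrix.conjTranspose_conjTranspose, hst2]
    module
  have hmulI : Complex.I * (-(Complex.I/2)) = (2⁻¹ : ℂ) := by
    rw [mul_neg, ← mul_div_assoc, Complex.I_mul_I]; norm_num
  have hAdec : A = PA + Complex.I • QA := by
    rw [hPA, hQA, smul_smul, hmulI]
    module
  have hBdec : B = PB + Complex.I • QB := by
    rw [hPB, hQB, smul_smul, hmulI]
    module
  -- completeness relation for general matrices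
  have key : ∑ k, Matrix.trace (A * X k) * Matrix.trace (B * X k)
      = -(1/(N:ℂ)) * Matrix.trace (A * B) := by
    have htA : ∀ k, Matrix.trace (A * X k)
        = Matrix.trace (PA * X k) + Complex.I * Matrix.trace (QA * X k) := by
      intro k
      conv_lhs => rw [hAdec]
      rw [Matrix.add_mul, Matrix.trace_add]
      congr 1
      rw [smul_mul_assoc, Matrix.trace_smul, smul_eq_mul]
    have htB : ∀ k, Matrix.trace (B * X k)
        = Matrix.trace (PB * X k) + Complex.I * Matrix.trace (QB * X k) := by
      intro k
      conv_lhs => rw [hBdec]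
      rw [Matrix.add_mul, Matrix.trace_add]
      congr 1
      rw [smul_mul_assoc, Matrix.trace_smul, smul_eq_mul]
    have hAB : Matrix.trace (A * B)
        = Matrix.trace (PA * PB) + Complex.I * Matrix.trace (PA * QB)
          + Complex.I * Matrix.trace (QA * PB) - Matrix.trace (QA * QB) := by
      conv_lhs => rw [hAdec, hBdec]
      simp only [Matrix.add_mul, Matrix.mul_add, smul_mul_assoc, Matrix.mul_smul,
        smul_smul, Matrix.trace_add, Matrix.trace_smul, smul_eq_mul]
      linear_combination (Matrix.trace (QA * QB)) * Complex.I_mul_I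
    calc ∑ k, Matrix.trace (A * X k) * Matrix.trace (B * X k)
        = ∑ k, (Matrix.trace (PA * X k) * Matrix.trace (PB * X k)
            + Complex.I * (Matrix.trace (PA * X k) * Matrix.trace (QB * X k))
            + Complex.I * (Matrix.trace (QA * X k) * Matrix.trace (PB * X k))
            - Matrix.trace (QA * X k) * Matrix.trace (QB * X k)) := by
          refine Finset.sum_congr rfl fun k _ => ?_
          rw [htA, htB]
          linear_combination
            (Matrix.trace (QA * X k) * Matrix.trace (QB * X k)) * Complex.I_mul_I
      _ = (∑ k, Matrix.trace (PA * X k) * Matrix.trace (PB * X k))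
            + Complex.I * (∑ k, Matrix.trace (PA * X k) * Matrix.trace (QB * X k))
            + Complex.I * (∑ k, Matrix.trace (QA * X k) * Matrix.trace (PB * X k))
            - ∑ k, Matrix.trace (QA * X k) * Matrix.trace (QB * X k) := by
          rw [Finset.sum_sub_distrib, Finset.sum_add_distrib, Finset.sum_add_distrib,
            ← Finset.mul_sum, ← Finset.mul_sum]
      _ = -(1/(N:ℂ)) * Matrix.trace (A * B) := by
          rw [hS PA PB hPAs hPBs, hS PA QB hPAs hQBs, hS QA PB hQAs hPBs,
            hS QA QB hQAs hQBs, hAB]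
          ring
  calc ∑ k, (Matrix.trace (A * X k) / (N : ℂ)) * (Matrix.trace (B * X k) / (N : ℂ))
      = (∑ k, Matrix.trace (A * X k) * Matrix.trace (B * X k)) / (N:ℂ)^2 := by
        rw [Finset.sum_div]
        exact Finset.sum_congr rfl fun k _ => by ring
    _ = -(1 / (N : ℂ) ^ 2) * (Matrix.trace (A * B) / (N : ℂ)) := by
        rw [key]; ring
end

section
/- Let K be a compact Lie group with Lie algebra k equipped with an Ad-invariant inner product, and let ρ : K → ℂ be a smooth conjugation-invariant function. Fix α ∈ K and define F(a₁, a₂) = ρ(a₂⁻¹ α a₁) on K × K. Then for any orthonormal basis {X_j} of k, ∑_j (X̂_j^{a₁} − X̂_j^{a₂})² F = 4 (Δρ)(a₂⁻¹ α a₁), where X̂^{a_i} denotes differentiation along the left-invariant vector field X applied in the variable a_i, and Δ = ∑_j X̂_j² is the left-invariant Laplacian on K. -/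
open scoped BigOperators

/-- Derivative of `f : K → ℂ` along the left-invariant vector field associated to `X`,
where `s ↦ e (s • X)` is the one-parameter subgroup of `X`. -/
noncomputable def lderiv {K : Type*} [Group K] {𝔨 : Type*} [AddCommGroup 𝔨] [Module ℝ 𝔨]
    (e : 𝔨 → K) (X : 𝔨) (f : K → ℂ) (x : K) : ℂ :=
  deriv (fun s : ℝ => f (x * e (s • X))) 0

/-- The left-invariant Laplacian `Δ = ∑ⱼ X̂ⱼ²` associated to an orthonormal basis. -/
noncomputable def laplacian {K : Type*} [Group K] {𝔨 : Type*} [NormedAddCommGroup 𝔨]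
    [InnerProductSpace ℝ 𝔨] {ι : Type*} [Fintype ι] (B : OrthonormalBasis ι ℝ 𝔨)
    (e : 𝔨 → K) (f : K → ℂ) (x : K) : ℂ :=
  ∑ j, lderiv e (B j) (lderiv e (B j) f) x

/-- The operator `X̂^{a₁} − X̂^{a₂}` on functions of two group variables. -/
noncomputable def Dop {K : Type*} [Group K] {𝔨 : Type*} [AddCommGroup 𝔨] [Module ℝ 𝔨]
    (e : 𝔨 → K) (X : 𝔨) (F : K × K → ℂ) (a : K × K) : ℂ :=
  deriv (fun s : ℝ => F (a.1 * e (s • X), a.2)) 0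
    - deriv (fun s : ℝ => F (a.1, a.2 * e (s • X))) 0


section Aux

variable {K : Type*} [Group K] {𝔨 : Type*} [AddCommGroup 𝔨] [Module ℝ 𝔨]

lemma aux_inv (e : 𝔨 → K) (he0 : e 0 = 1)
    (headd : ∀ (X : 𝔨) (s t : ℝ), e ((s + t) • X) = e (s • X) * e (t • X))
    (X : 𝔨) (s : ℝ) : (e (s • X))⁻¹ = e ((-s) • X) := by
  refine inv_eq_of_mul_eq_one_right ?_
  rw [← headd X s (-s)]
  simp [he0]

lemma aux_comm {ρ : K → ℂ} (hconj : ∀ u x : K, ρ (u * x * u⁻¹) = ρ x) (x y : K) :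
    ρ (x * y) = ρ (y * x) := by
  have h := hconj x (y * x)
  rw [← h]
  congr 1
  group

/-- Key pointwise computation for a single `X`. -/
lemma Dop_sq_eq (e : 𝔨 → K) (he0 : e 0 = 1)
    (headd : ∀ (X : 𝔨) (s t : ℝ), e ((s + t) • X) = e (s • X) * e (t • X))
    (ρ : K → ℂ) (hconj : ∀ u x : K, ρ (u * x * u⁻¹) = ρ x)
    (X : 𝔨) (α a₁ a₂ : K) :
    Dop e X (Dop e X (fun a : K × K => ρ (a.2⁻¹ * α * a.1))) (a₁, a₂)
      = 4 * lderiv e X (lderiv e X ρ) (a₂⁻¹ * α * a₁) := by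
  -- Step A: the inner Dop is `2 * lderiv e X ρ (b₂⁻¹ * α * b₁)`.
  have stepA : ∀ b₁ b₂ : K,
      Dop e X (fun a : K × K => ρ (a.2⁻¹ * α * a.1)) (b₁, b₂)
        = 2 * lderiv e X ρ (b₂⁻¹ * α * b₁) := by
    intro b₁ b₂
    set φ : ℝ → ℂ := fun t => ρ ((b₂⁻¹ * α * b₁) * e (t • X)) with hφ
    rw [show Dop e X (fun a : K × K => ρ (a.2⁻¹ * α * a.1)) (b₁, b₂)
        = deriv (fun s : ℝ => ρ (b₂⁻¹ * α * (b₁ * e (s • X)))) 0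
          - deriv (fun s : ℝ => ρ ((b₂ * e (s • X))⁻¹ * α * b₁)) 0 from rfl]
    have h1 : (fun s : ℝ => ρ (b₂⁻¹ * α * (b₁ * e (s • X)))) = φ := by
      funext s; rw [hφ]; congr 1; group
    have h2 : (fun s : ℝ => ρ ((b₂ * e (s • X))⁻¹ * α * b₁)) = fun s : ℝ => φ (-s) := by
      funext s
      have hx : (b₂ * e (s • X))⁻¹ * α * b₁ = e ((-s) • X) * ((b₂⁻¹ * α * b₁)) := by
        rw [mul_inv_rev, aux_inv e he0 headd]; group
      rw [hx, aux_comm hconj]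
    rw [h1, h2, deriv_comp_neg, neg_zero, lderiv, ← hφ]
    ring
  have hfun : Dop e X (fun a : K × K => ρ (a.2⁻¹ * α * a.1))
      = fun b : K × K => 2 * lderiv e X ρ (b.2⁻¹ * α * b.1) := by
    funext b
    obtain ⟨b₁, b₂⟩ := b
    exact stepA b₁ b₂
  rw [hfun]
  set g : K := a₂⁻¹ * α * a₁ with hg
  set ψ : ℝ → ℂ := fun t => ρ (g * e (t • X)) with hψ
  rw [show Dop e X (fun b : K × K => 2 * lderiv e X ρ (b.2⁻¹ * α * b.1)) (a₁, a₂)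
      = deriv (fun s : ℝ => 2 * lderiv e X ρ (a₂⁻¹ * α * (a₁ * e (s • X)))) 0
        - deriv (fun s : ℝ => 2 * lderiv e X ρ ((a₂ * e (s • X))⁻¹ * α * a₁)) 0 from rfl]
  -- lderiv along the orbit equals deriv ψ
  have hψ1 : ∀ s : ℝ, lderiv e X ρ (g * e (s • X)) = deriv ψ s := by
    intro s
    have hfn : (fun t : ℝ => ρ (g * e (s • X) * e (t • X))) = fun t : ℝ => ψ (s + t) := by
      funext t
      show ρ (g * e (s • X) * e (t • X)) = ρ (g * e ((s + t) • X))
      rw [headd X s t, mul_assoc]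
    rw [lderiv, hfn, deriv_comp_const_add, add_zero]
  have hψ2 : ∀ s : ℝ, lderiv e X ρ (e ((-s) • X) * g) = deriv ψ (-s) := by
    intro s
    have hfn : (fun t : ℝ => ρ (e ((-s) • X) * g * e (t • X))) = fun t : ℝ => ψ (t + (-s)) := by
      funext t
      show ρ (e ((-s) • X) * g * e (t • X)) = ρ (g * e ((t + (-s)) • X))
      rw [mul_assoc, aux_comm hconj, headd X t (-s), ← mul_assoc]
    rw [lderiv, hfn, deriv_comp_add_const, zero_add]
  have e1 : (fun s : ℝ => 2 * lderiv e X ρ (a₂⁻¹ * α * (a₁ * e (s • X))))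
      = fun s : ℝ => 2 * deriv ψ s := by
    funext s
    rw [show a₂⁻¹ * α * (a₁ * e (s • X)) = g * e (s • X) by rw [hg]; group, hψ1]
  have e2 : (fun s : ℝ => 2 * lderiv e X ρ ((a₂ * e (s • X))⁻¹ * α * a₁))
      = fun s : ℝ => (fun u : ℝ => 2 * deriv ψ u) (-s) := by
    funext s
    have hx : (a₂ * e (s • X))⁻¹ * α * a₁ = e ((-s) • X) * g := by
      rw [mul_inv_rev, aux_inv e he0 headd, hg]; group
    rw [hx, hψ2]
  rw [e1, e2, deriv_comp_neg (f := fun u : ℝ => 2 * deriv ψ u), neg_zero]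
  have hL : lderiv e X (lderiv e X ρ) g = deriv (deriv ψ) 0 := by
    rw [lderiv]
    congr 1
    funext s
    exact hψ1 s
  rw [hL, deriv_const_mul_field]
  ring

end Aux

/-- For a conjugation-invariant smooth `ρ : K → ℂ` and
`F(a₁,a₂) = ρ(a₂⁻¹ α a₁)`, one has
`∑ⱼ (X̂ⱼ^{a₁} − X̂ⱼ^{a₂})² F = 4 (Δρ)(a₂⁻¹ α a₁)`. -/
theorem sum_Dop_sq_eq_four_laplacian {K : Type*} [Group K]
    {𝔨 : Type*} [NormedAddCommGroup 𝔨] [InnerProductSpace ℝ 𝔨]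
    {ι : Type*} [Fintype ι] (B : OrthonormalBasis ι ℝ 𝔨)
    (e : 𝔨 → K) (he0 : e 0 = 1)
    (headd : ∀ (X : 𝔨) (s t : ℝ), e ((s + t) • X) = e (s • X) * e (t • X))
    (ρ : K → ℂ) (hconj : ∀ u x : K, ρ (u * x * u⁻¹) = ρ x)
    (α : K) (a₁ a₂ : K) :
    ∑ j, Dop e (B j) (Dop e (B j) (fun a : K × K => ρ (a.2⁻¹ * α * a.1))) (a₁, a₂)
      = 4 * laplacian B e ρ (a₂⁻¹ * α * a₁) := by
  have key := fun j => Dop_sq_eq e he0 headd ρ hconj (B j) α a₁ a₂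
  simp only [key, laplacian, Finset.mul_sum]
end
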